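/- Define g_m(λ) = (φ(m)/m) · (C_m/λ²) · ∑_{1 ≤ Δ ≤ 2λ/C_m} φ(Δ) · (gcd(Δ,m)/φ(gcd(Δ,m))) · log(2λ/(C_m Δ)) for λ > 0, where C_m = (φ(m)/(ζ(2)m)) ∏_{p|m}(1-1/p²)^{-1}. Then g_m(λ) → 1 as λ → ∞. -/

import Mathlib

open Finset Real ArithmeticFunction




/-- Sum of q over Icc 1 n as a real. -/
lemma sum_Icc_id_real (n : ℕ) : ∑ q ∈ Finset.Icc 1 n, (q : ℝ) = n * (n + 1) / 2 := by
  induction n with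
  | zero => simp
  | succ n ih =>
    rw [Finset.sum_Icc_succ_top (by omega : 1 ≤ n + 1), ih]
    push_cast
    ring

/-- `E(n)` bound: |S(n) log n - ∑ q log q - n²/4| ≤ n/4. -/
lemma Ebound : ∀ n : ℕ, 1 ≤ n →
    |(n * (n + 1) / 2 : ℝ) * Real.log n - (∑ q ∈ Finset.Icc 1 n, (q : ℝ) * Real.log q)
      - (n : ℝ) ^ 2 / 4| ≤ (n : ℝ) / 4 := by
  intro n hn
  induction n with
  | zero => omega
  | succ n ih =>
    rcases Nat.eq_or_lt_of_le hn with h1 | h1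
    · simp [← h1]
    · have hn1 : 1 ≤ n := by omega
      have ihh := ih hn1
      have hnR : (1 : ℝ) ≤ n := by exact_mod_cast hn1
      have hnpos : (0 : ℝ) < n := by linarith
      -- log bounds for log((n+1)/n)
      have hlog_ub : Real.log ((n : ℝ) + 1) - Real.log n ≤ 1 / n := by
        rw [← Real.log_div (by positivity) (by positivity)]
        have := Real.log_le_sub_one_of_pos (show (0:ℝ) < ((n:ℝ)+1)/n by positivity)
        have h2 : ((n : ℝ) + 1) / n - 1 = 1 / n := by field_simp; ring
        linarith
      have hlog_lb : 1 / ((n : ℝ) + 1) ≤ Real.log ((n : ℝ) + 1) - Real.log n := by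
        rw [← Real.log_div (by positivity) (by positivity)]
        have := Real.log_le_sub_one_of_pos (show (0:ℝ) < (n:ℝ)/((n:ℝ)+1) by positivity)
        have h2 : Real.log ((n : ℝ) / ((n:ℝ)+1)) = - Real.log (((n:ℝ)+1)/n) := by
          rw [← Real.log_inv]
          congr 1
          field_simp
        have h3 : (n : ℝ) / ((n:ℝ)+1) - 1 = - (1 / ((n:ℝ)+1)) := by field_simp; ring
        rw [h2, h3] at this
        linarith
      rw [Finset.sum_Icc_succ_top (by omega : 1 ≤ n + 1)]
      push_cast
      push_cast at ihh
      have key : ((n:ℝ) + 1) * ((n + 1) + 1) / 2 * Real.log ((n:ℝ) + 1)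
          - ((∑ q ∈ Finset.Icc 1 n, (q : ℝ) * Real.log q) + ((n:ℝ)+1) * Real.log ((n:ℝ)+1))
          - ((n:ℝ) + 1) ^ 2 / 4
          = ((n * (n + 1) / 2 : ℝ) * Real.log n - (∑ q ∈ Finset.Icc 1 n, (q : ℝ) * Real.log q)
              - (n : ℝ) ^ 2 / 4)
            + ((n : ℝ) * ((n:ℝ)+1) / 2 * (Real.log ((n:ℝ)+1) - Real.log n) - (2*(n:ℝ)+1)/4) := by
        ring
      rw [key]
      have hD_ub : (n : ℝ) * ((n:ℝ)+1) / 2 * (Real.log ((n:ℝ)+1) - Real.log n) - (2*(n:ℝ)+1)/4 ≤ 1/4 := by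
        have : (n : ℝ) * ((n:ℝ)+1) / 2 * (Real.log ((n:ℝ)+1) - Real.log n)
            ≤ (n : ℝ) * ((n:ℝ)+1) / 2 * (1/n) := by
          apply mul_le_mul_of_nonneg_left hlog_ub (by positivity)
        have h2 : (n : ℝ) * ((n:ℝ)+1) / 2 * (1/n) = ((n:ℝ)+1)/2 := by field_simp
        rw [h2] at this
        linarith
      have hD_lb : -(1/4) ≤ (n : ℝ) * ((n:ℝ)+1) / 2 * (Real.log ((n:ℝ)+1) - Real.log n) - (2*(n:ℝ)+1)/4 := by
        have : (n : ℝ) * ((n:ℝ)+1) / 2 * (1/((n:ℝ)+1))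
            ≤ (n : ℝ) * ((n:ℝ)+1) / 2 * (Real.log ((n:ℝ)+1) - Real.log n) := by
          apply mul_le_mul_of_nonneg_left hlog_lb (by positivity)
        have h2 : (n : ℝ) * ((n:ℝ)+1) / 2 * (1/((n:ℝ)+1)) = (n:ℝ)/2 := by field_simp
        rw [h2] at this
        linarith
      rw [abs_le] at ihh ⊢
      obtain ⟨l, r⟩ := ihh
      constructor <;> linarith

noncomputable def Ffun (x : ℝ) : ℝ := ∑ q ∈ Finset.Icc 1 ⌊x⌋₊, (q : ℝ) * Real.log (x / q)

lemma Ffun_approx {x : ℝ} (hx : 1 ≤ x) : |Ffun x - x ^ 2 / 4| ≤ 2 * x := by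
  set n := ⌊x⌋₊ with hn
  have hn1 : 1 ≤ n := Nat.le_floor (by exact_mod_cast hx)
  have hnx : (n : ℝ) ≤ x := Nat.floor_le (by linarith)
  have hxn : x < n + 1 := Nat.lt_floor_add_one x
  have hnR : (1 : ℝ) ≤ n := by exact_mod_cast hn1
  have hxpos : (0 : ℝ) < x := by linarith
  -- rewrite Ffun
  have hF : Ffun x = (n * (n+1)/2 : ℝ) * Real.log x - ∑ q ∈ Finset.Icc 1 n, (q:ℝ) * Real.log q := by
    rw [Ffun, ← hn, ← sum_Icc_id_real n, Finset.sum_mul, ← Finset.sum_sub_distrib]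
    apply Finset.sum_congr rfl
    intro q hq
    have hq1 : 1 ≤ q := (Finset.mem_Icc.mp hq).1
    have hqpos : (0:ℝ) < q := by exact_mod_cast hq1
    rw [Real.log_div (by positivity) (by positivity)]
    ring
  have hE := Ebound n hn1
  have hlog : 0 ≤ Real.log x - Real.log n ∧ Real.log x - Real.log n ≤ (x - n)/n := by
    constructor
    · have := Real.log_le_log (by positivity) hnx
      linarith
    · rw [← Real.log_div (by positivity) (by positivity)]
      have := Real.log_le_sub_one_of_pos (show (0:ℝ) < x/n by positivity)
      have h2 : x / n - 1 = (x - n)/n := by field_simp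
      linarith
  have hterm : 0 ≤ (n * (n+1)/2 : ℝ) * (Real.log x - Real.log n) ∧
      (n * (n+1)/2 : ℝ) * (Real.log x - Real.log n) ≤ x := by
    constructor
    · exact mul_nonneg (by positivity) hlog.1
    · have h1 : (n * (n+1)/2 : ℝ) * (Real.log x - Real.log n) ≤ (n * (n+1)/2 : ℝ) * ((x - n)/n) :=
        mul_le_mul_of_nonneg_left hlog.2 (by positivity)
      have h2 : (n * (n+1)/2 : ℝ) * ((x - n)/n) = ((n:ℝ)+1)/2 * (x - n) := by
        field_simp
      have h3 : x - n ≤ 1 := by linarith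
      have h4 : ((n:ℝ)+1)/2 * (x - n) ≤ ((n:ℝ)+1)/2 * 1 := by
        apply mul_le_mul_of_nonneg_left h3 (by positivity)
      have h5 : ((n:ℝ)+1)/2 ≤ x := by linarith
      nlinarith [hlog.1, hlog.2]
  have hsq : |(n:ℝ)^2 - x^2| ≤ 3 * x := by
    rw [abs_of_nonpos (by nlinarith)]
    nlinarith
  have hkey : Ffun x - x^2/4 = (n * (n+1)/2 : ℝ) * (Real.log x - Real.log n)
      + ((n * (n + 1) / 2 : ℝ) * Real.log n - (∑ q ∈ Finset.Icc 1 n, (q : ℝ) * Real.log q)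
          - (n : ℝ) ^ 2 / 4)
      + ((n:ℝ)^2 - x^2)/4 := by
    rw [hF]; ring
  rw [hkey]
  have h6 : (n:ℝ)/4 ≤ x/4 := by linarith
  rw [abs_le] at hE ⊢
  rw [abs_le] at hsq
  obtain ⟨l, r⟩ := hE
  obtain ⟨l2, r2⟩ := hsq
  constructor <;> nlinarith [hterm.1, hterm.2]


lemma summable_moebius_like (f : ℕ → ℝ) (hf : ∀ d, |f d| ≤ 1) (hf0 : f 0 = 0) :
    Summable (fun d : ℕ => f d / (d : ℝ) ^ 2) := by
  apply Summable.of_norm_bounded (g := fun d : ℕ => 1 / (d : ℝ) ^ 2)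
  · exact Real.summable_one_div_nat_pow.mpr one_lt_two
  · intro d
    rcases Nat.eq_zero_or_pos d with rfl | hd
    · simp [hf0]
    · have hd2 : (0:ℝ) < (d:ℝ)^2 := by positivity
      rw [Real.norm_eq_abs, abs_div, abs_of_pos hd2]
      gcongr
      exact hf d

lemma hasSum_moebius_div_sq :
    HasSum (fun d : ℕ => ((moebius d : ℤ) : ℝ) / (d : ℝ) ^ 2) (6 / π ^ 2) := by
  have hsum : Summable (fun d : ℕ => ((moebius d : ℤ) : ℝ) / (d : ℝ) ^ 2) := by
    apply summable_moebius_like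
    · intro d
      have := abs_moebius_le_one (n := d)
      exact_mod_cast this
    · simp
  obtain ⟨t, ht⟩ := hsum
  -- transfer to ℂ
  have htC : HasSum (fun d : ℕ => (((moebius d : ℤ) : ℝ) / (d : ℝ) ^ 2 : ℂ)) (t : ℂ) := by
    have := (Complex.ofRealCLM : ℝ →L[ℝ] ℂ).hasSum ht
    simpa using this
  have hterm : ∀ d : ℕ, (((moebius d : ℤ) : ℝ) / (d : ℝ) ^ 2 : ℂ)
      = LSeries.term (fun n => ((moebius n : ℤ) : ℂ)) 2 d := by
    intro d
    rcases Nat.eq_zero_or_pos d with rfl | hd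
    · simp [LSeries.term]
    · rw [LSeries.term_of_ne_zero (by omega : d ≠ 0)]
      rw [show ((2:ℂ)) = ((2:ℕ):ℂ) by norm_num, Complex.cpow_natCast]
      push_cast
      ring
  have htC' : HasSum (LSeries.term (fun n => ((moebius n : ℤ) : ℂ)) 2) (t : ℂ) := by
    rwa [funext hterm] at htC
  have hL : LSeries (fun n => ((moebius n : ℤ) : ℂ)) 2 = (t : ℂ) := htC'.tsum_eq
  have hre : (1 : ℝ) < (2 : ℂ).re := by norm_num
  have hmain := ArithmeticFunction.LSeries_zeta_mul_Lseries_moebius hre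
  have hzeta : LSeries (fun n => ((zeta n : ℕ) : ℂ)) 2 = riemannZeta 2 :=
    ArithmeticFunction.LSeries_zeta_eq_riemannZeta hre
  rw [hzeta, riemannZeta_two, hL] at hmain
  have hpi : ((π : ℂ)) ^ 2 ≠ 0 := by
    simp [Real.pi_ne_zero]
  have ht6 : t = 6 / π ^ 2 := by
    have : ((π:ℂ) ^ 2 / 6) * t = 1 := hmain
    have h2 : (t : ℂ) = 6 / (π:ℂ)^2 := by
      field_simp at this ⊢
      linear_combination this
    exact_mod_cast h2
  rwa [ht6] at ht

/-- `h` function: μ(d) if d coprime to m, else 0. -/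
noncomputable def hfun (m d : ℕ) : ℝ := if Nat.Coprime d m then ((moebius d : ℤ) : ℝ) else 0

lemma hfun_abs_le (m d : ℕ) : |hfun m d| ≤ 1 := by
  rw [hfun]
  split
  · exact_mod_cast abs_moebius_le_one (n := d)
  · simp

lemma hfun_zero (m : ℕ) : hfun m 0 = 0 := by simp [hfun]

/-- Generic finset-of-primes version. -/
lemma hasSum_primeset (S : Finset ℕ) (hS : ∀ p ∈ S, Nat.Prime p) :
    HasSum (fun d : ℕ =>
        (if ∀ p ∈ S, ¬ p ∣ d then ((moebius d : ℤ) : ℝ) else 0) / (d : ℝ) ^ 2)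
      ((6 / π ^ 2) * ∏ p ∈ S, (1 - 1 / (p : ℝ) ^ 2)⁻¹) := by
  classical
  induction S using Finset.induction_on with
  | empty =>
    simpa using hasSum_moebius_div_sq
  | @insert p S hpS ih =>
    have hp : Nat.Prime p := hS p (Finset.mem_insert_self p S)
    have hSprime : ∀ q ∈ S, Nat.Prime q := fun q hq => hS q (Finset.mem_insert_of_mem hq)
    have ihS := ih hSprime
    set f : ℕ → ℝ := fun d =>
      (if ∀ q ∈ S, ¬ q ∣ d then ((moebius d : ℤ) : ℝ) else 0) / (d : ℝ) ^ 2 with hf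
    set f' : ℕ → ℝ := fun d =>
      (if ∀ q ∈ insert p S, ¬ q ∣ d then ((moebius d : ℤ) : ℝ) else 0) / (d : ℝ) ^ 2 with hf'
    have hppos : 0 < p := hp.pos
    have hpR : (1 : ℝ) < p := by exact_mod_cast hp.one_lt
    have hfac : (1 : ℝ) - 1 / (p:ℝ)^2 ≠ 0 := by
      have : (1:ℝ) / (p:ℝ)^2 < 1 := by
        rw [div_lt_one (by positivity)]
        nlinarith
      linarith
    -- summability of f'
    have hsum' : Summable f' := by
      apply summable_moebius_like
      · intro d
        split
        · exact_mod_cast abs_moebius_le_one (n := d)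
        · simp
      · simp
    obtain ⟨b, hb⟩ := hsum'
    -- the multiples-of-p part
    have hH : HasSum (fun d => f d - f' d) (-(1 / (p:ℝ)^2) * b) := by
      rw [← Function.Injective.hasSum_iff (g := fun e : ℕ => p * e)
          (mul_right_injective₀ (by omega))]
      · have hcomp : (fun d => f d - f' d) ∘ (fun e : ℕ => p * e)
            = fun e => -(1 / (p:ℝ)^2) * f' e := by
          funext e
          simp only [Function.comp_apply]
          have hfpe' : f' (p * e) = 0 := by
            rw [hf']
            simp only
            rw [if_neg]
            · simp
            · push_neg
              exact ⟨p, Finset.mem_insert_self p S, Dvd.intro e rfl⟩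
          rcases Classical.em (p ∣ e) with hpe | hpe
          · -- μ(p*e) = 0, f' e = 0
            have hsq : ¬ Squarefree (p * e) := by
              intro hsf
              have := hsf p (by
                obtain ⟨c, rfl⟩ := hpe
                exact ⟨c, by ring⟩)
              exact hp.ne_one (Nat.isUnit_iff.mp this)
            have hmu : moebius (p * e) = 0 := moebius_eq_zero_of_not_squarefree hsq
            have hfe' : f' e = 0 := by
              rw [hf']
              simp only
              rw [if_neg]
              · simp
              · push_neg
                exact ⟨p, Finset.mem_insert_self p S, hpe⟩
            rw [hfpe', hfe', hf]
            simp [hmu]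
          · -- p ∤ e
            have hcop : Nat.Coprime p e := (Nat.Prime.coprime_iff_not_dvd hp).mpr hpe
            have hmu : moebius (p * e) = moebius p * moebius e :=
              isMultiplicative_moebius.map_mul_of_coprime hcop
            have hcond : (∀ q ∈ S, ¬ q ∣ p * e) ↔ (∀ q ∈ insert p S, ¬ q ∣ e) := by
              constructor
              · intro h q hq
                rcases Finset.mem_insert.mp hq with rfl | hq'
                · exact hpe
                · intro hqe
                  exact h q hq' (hqe.mul_left p)
              · intro h q hq hqpe
                have hqprime := hSprime q hq
                rcases (Nat.Prime.dvd_mul hqprime).mp hqpe with hqp | hqe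
                · have : q = p := (Nat.prime_dvd_prime_iff_eq hqprime hp).mp hqp
                  exact hpS (this ▸ hq)
                · exact h q (Finset.mem_insert_of_mem hq) hqe
            rw [hfpe', sub_zero, hf, hf']
            simp only
            by_cases hc : ∀ q ∈ insert p S, ¬ q ∣ e
            · rw [if_pos (hcond.mpr hc), if_pos hc, hmu, moebius_apply_prime hp]
              have hpe2 : ((p * e : ℕ) : ℝ)^2 = (p:ℝ)^2 * (e:ℝ)^2 := by
                push_cast; ring
              rw [hpe2]
              push_cast
              first
              | (field_simp; ring)
              | field_simp
            · rw [if_neg (fun hh => hc (hcond.mp hh)), if_neg hc]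
              simp
        rw [hcomp]
        exact hb.mul_left _
      · intro d hd
        have hpd : ¬ p ∣ d := by
          intro hdvd
          obtain ⟨e, rfl⟩ := hdvd
          exact hd ⟨e, rfl⟩
        have : f' d = f d := by
          rw [hf, hf']
          simp only
          congr 1
          apply if_congr _ rfl rfl
          constructor
          · intro h q hq
            exact h q (Finset.mem_insert_of_mem hq)
          · intro h q hq
            rcases Finset.mem_insert.mp hq with rfl | hq'
            · exact hpd
            · exact h q hq'
        rw [this]
        ring
    -- combine
    have hcomb : HasSum f (b + -(1 / (p:ℝ)^2) * b) := by
      have := hb.add hH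
      convert this using 2 with d
      ring
    have hba : b * (1 - 1/(p:ℝ)^2) = (6 / π ^ 2) * ∏ q ∈ S, (1 - 1 / (q : ℝ) ^ 2)⁻¹ := by
      have := ihS.unique hcomb
      rw [this]; ring
    have hbval : b = (6 / π ^ 2) * ∏ q ∈ insert p S, (1 - 1 / (q : ℝ) ^ 2)⁻¹ := by
      have hstep : b = (b * (1 - 1/(p:ℝ)^2)) * (1 - 1/(p:ℝ)^2)⁻¹ := by
        rw [mul_assoc, mul_inv_cancel₀ hfac, mul_one]
      rw [hstep, hba, Finset.prod_insert hpS]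
      ring
    exact hbval ▸ hb

lemma hasSum_hfun (m : ℕ) (hm : 0 < m) :
    HasSum (fun d : ℕ => hfun m d / (d : ℝ) ^ 2)
      ((6 / π ^ 2) * ∏ p ∈ m.primeFactors, (1 - 1 / (p : ℝ) ^ 2)⁻¹) := by
  have h := hasSum_primeset m.primeFactors (fun p hp => Nat.prime_of_mem_primeFactors hp)
  convert h using 2 with d
  rw [hfun]
  congr 1
  apply if_congr _ rfl rfl
  constructor
  · intro hcop p hp hpd
    have hpm : p ∣ m := Nat.dvd_of_mem_primeFactors hp
    have hpprime := Nat.prime_of_mem_primeFactors hp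
    exact Nat.Prime.not_coprime_iff_dvd.mpr ⟨p, hpprime, hpd, hpm⟩ hcop
  · intro h
    by_contra hcop
    obtain ⟨p, hp, hpd, hpm⟩ := Nat.Prime.not_coprime_iff_dvd.mp hcop
    exact h p (Nat.mem_primeFactors.mpr ⟨hp, hpm, hm.ne'⟩) hpd


section StepA
variable (m : ℕ)

/-- LHS as arithmetic function. -/
noncomputable def Fm : ArithmeticFunction ℝ :=
  ⟨fun Δ => (Nat.totient Δ : ℝ) * ((Nat.gcd Δ m : ℝ) / (Nat.totient (Nat.gcd Δ m) : ℝ)), by simp⟩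

/-- RHS as arithmetic function: (hfun) * id. -/
noncomputable def Rm : ArithmeticFunction ℝ :=
  ⟨fun d => if Nat.Coprime d m then ((moebius d : ℤ) : ℝ) else 0, by simp⟩

lemma Rm_isMultiplicative : (Rm m).IsMultiplicative := by
  constructor
  · show (if Nat.Coprime 1 m then ((moebius 1 : ℤ) : ℝ) else 0) = 1
    simp [Nat.coprime_one_left]
  · intro a b hab
    show (if Nat.Coprime (a*b) m then ((moebius (a*b) : ℤ) : ℝ) else 0)
        = (if Nat.Coprime a m then ((moebius a : ℤ) : ℝ) else 0)
          * (if Nat.Coprime b m then ((moebius b : ℤ) : ℝ) else 0)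
    simp only [Nat.coprime_mul_iff_left]
    by_cases ha : Nat.Coprime a m
    · by_cases hb : Nat.Coprime b m
      · rw [if_pos (⟨ha, hb⟩ : _ ∧ _), if_pos ha, if_pos hb,
          isMultiplicative_moebius.map_mul_of_coprime hab]
        push_cast; ring
      · rw [if_neg (fun h => hb h.2), if_neg hb, mul_zero]
    · rw [if_neg (fun h => ha h.1), if_neg ha, zero_mul]

lemma Fm_isMultiplicative (hm : 0 < m) : (Fm m).IsMultiplicative := by
  constructor
  · show (Nat.totient 1 : ℝ) * ((Nat.gcd 1 m : ℝ) / (Nat.totient (Nat.gcd 1 m) : ℝ)) = 1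
    simp
  · intro a b hab
    show (Nat.totient (a*b) : ℝ) * ((Nat.gcd (a*b) m : ℝ) / (Nat.totient (Nat.gcd (a*b) m) : ℝ))
        = ((Nat.totient a : ℝ) * ((Nat.gcd a m : ℝ) / (Nat.totient (Nat.gcd a m) : ℝ)))
          * ((Nat.totient b : ℝ) * ((Nat.gcd b m : ℝ) / (Nat.totient (Nat.gcd b m) : ℝ)))
    have hgcd : Nat.gcd (a*b) m = Nat.gcd a m * Nat.gcd b m := by
      rw [Nat.gcd_comm (a*b) m, Nat.Coprime.gcd_mul m hab, Nat.gcd_comm m a, Nat.gcd_comm m b]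
    have hcop2 : Nat.Coprime (Nat.gcd a m) (Nat.gcd b m) :=
      Nat.Coprime.coprime_dvd_left (Nat.gcd_dvd_left a m)
        (Nat.Coprime.coprime_dvd_right (Nat.gcd_dvd_left b m) hab)
    rw [hgcd, Nat.totient_mul hab, Nat.totient_mul hcop2]
    push_cast
    ring
end StepA

lemma key_identity (m : ℕ) (hm : 0 < m) :
    Fm m = Rm m * (↑(ArithmeticFunction.id) : ArithmeticFunction ℝ) := by
  have hRmul : (Rm m * (↑(ArithmeticFunction.id) : ArithmeticFunction ℝ)).IsMultiplicative :=
    (Rm_isMultiplicative m).mul (isMultiplicative_id.natCast)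
  rw [ArithmeticFunction.IsMultiplicative.eq_iff_eq_on_prime_powers _ (Fm_isMultiplicative m hm)
    _ hRmul]
  intro p k hp
  rcases Nat.eq_zero_or_pos k with rfl | hk
  · simp [(Fm_isMultiplicative m hm).map_one, hRmul.map_one]
  have hppos : 0 < p := hp.pos
  have hpR : (1:ℝ) < p := by exact_mod_cast hp.one_lt
  -- RHS evaluation
  have hRHS : (Rm m * (↑(ArithmeticFunction.id) : ArithmeticFunction ℝ)) (p ^ k)
      = (p:ℝ)^k + (if Nat.Coprime p m then -((p:ℝ)^(k-1)) else 0) := by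
    rw [ArithmeticFunction.mul_apply]
    simp only [ArithmeticFunction.natCoe_apply, ArithmeticFunction.id_apply]
    rw [Nat.sum_divisorsAntidiagonal (f := fun d e => Rm m d * (e : ℝ))]
    rw [Nat.sum_divisors_prime_pow hp]
    have hsummand : ∀ i ∈ Finset.range (k+1),
        Rm m (p ^ i) * ((p ^ k / p ^ i : ℕ) : ℝ)
          = (if i = 0 then (p:ℝ)^k else 0)
            + (if i = 1 then (if Nat.Coprime p m then -((p:ℝ)^(k-1)) else 0) else 0) := by
      intro i hi
      have hik : i ≤ k := by
        simp only [Finset.mem_range] at hi; omega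
      have hdiv : (p ^ k / p ^ i : ℕ) = p ^ (k - i) := Nat.pow_div hik hppos
      rcases Nat.eq_zero_or_pos i with rfl | hi1
      · have : Rm m (p ^ 0) = 1 := by
          simpa using (Rm_isMultiplicative m).map_one
        rw [this, hdiv]
        simp
      rcases Nat.eq_or_lt_of_le hi1 with h1 | h2
      · -- i = 1
        have hi1' : i = 1 := h1.symm
        subst hi1'
        have hRval : Rm m (p ^ 1) = if Nat.Coprime p m then (-1 : ℝ) else 0 := by
          show (if Nat.Coprime (p^1) m then ((moebius (p^1) : ℤ) : ℝ) else 0) = _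
          rw [pow_one]
          by_cases hc : Nat.Coprime p m <;> simp [hc, moebius_apply_prime hp]
        rw [hRval, hdiv]
        by_cases hc : Nat.Coprime p m <;> simp [hc]
      · -- i ≥ 2
        have hmu : moebius (p ^ i) = 0 := by
          rw [moebius_apply_prime_pow hp (by omega)]
          simp [show i ≠ 1 by omega]
        have hRval : Rm m (p ^ i) = 0 := by
          show (if Nat.Coprime (p^i) m then ((moebius (p^i) : ℤ) : ℝ) else 0) = 0
          rw [hmu]
          simp
        rw [hRval]
        simp [show i ≠ 0 by omega, show i ≠ 1 by omega]
    rw [Finset.sum_congr rfl hsummand, Finset.sum_add_distrib,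
      Finset.sum_ite_eq' (Finset.range (k+1)) 0, Finset.sum_ite_eq' (Finset.range (k+1)) 1]
    simp [Finset.mem_range, show 0 < k + 1 by omega, show 1 < k + 1 by omega]
  rw [hRHS]
  -- LHS evaluation
  show (Nat.totient (p^k) : ℝ) * ((Nat.gcd (p^k) m : ℝ) / (Nat.totient (Nat.gcd (p^k) m) : ℝ)) = _
  have htot : (Nat.totient (p^k) : ℝ) = (p:ℝ)^k - (p:ℝ)^(k-1) := by
    rw [Nat.totient_prime_pow hp hk, Nat.cast_mul, Nat.cast_pow, Nat.cast_sub hp.one_lt.le]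
    have hpk : (p:ℝ)^k = (p:ℝ)^(k-1) * p := by
      rw [← pow_succ]; congr 1; omega
    rw [hpk]
    push_cast
    ring
  by_cases hc : Nat.Coprime p m
  · -- gcd = 1
    have hgcd : Nat.gcd (p^k) m = 1 := Nat.Coprime.pow_left k hc
    rw [hgcd, htot]
    rw [if_pos hc]
    simp only [Nat.cast_one, Nat.totient_one, div_one, mul_one]
    ring
  · -- p ∣ m, gcd = p^j with j ≥ 1
    have hpm : p ∣ m := hp.dvd_iff_not_coprime.mpr hc
    obtain ⟨j, hjk, hgcd⟩ := (Nat.dvd_prime_pow hp).mp (Nat.gcd_dvd_left (p^k) m)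
    have hpg : p ∣ Nat.gcd (p^k) m :=
      Nat.dvd_gcd (dvd_pow_self p (by omega)) hpm
    have hj1 : 1 ≤ j := by
      by_contra hj
      have : j = 0 := by omega
      rw [this, pow_zero] at hgcd
      rw [hgcd] at hpg
      exact hp.one_lt.ne' (Nat.eq_one_of_dvd_one hpg ▸ rfl)
    have htotg : (Nat.totient (Nat.gcd (p^k) m) : ℝ) = (p:ℝ)^(j-1) * ((p:ℝ) - 1) := by
      rw [hgcd, Nat.totient_prime_pow hp (by omega : 0 < j), Nat.cast_mul, Nat.cast_pow,
        Nat.cast_sub hp.one_lt.le]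
      push_cast
      ring
    have hgR : ((Nat.gcd (p^k) m : ℕ) : ℝ) = (p:ℝ)^j := by
      rw [hgcd]; push_cast; ring
    rw [htot, htotg, hgR]
    simp only [hc, if_false]
    have hpj : (p:ℝ)^j = (p:ℝ)^(j-1) * p := by
      rw [← pow_succ]
      congr 1
      omega
    have hpk : (p:ℝ)^k = (p:ℝ)^(k-1) * p := by
      rw [← pow_succ]
      congr 1
      omega
    have hne1 : (p:ℝ) - 1 ≠ 0 := by linarith
    have hne2 : (p:ℝ)^(j-1) ≠ 0 := by positivity
    rw [hpj, hpk]
    field_simp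
    ring


lemma swap_lemma (m : ℕ) (N : ℝ) :
    ∑ Δ ∈ Finset.Icc 1 ⌊N⌋₊, (∑ d ∈ Δ.divisors, hfun m d * ((Δ / d : ℕ) : ℝ)) * Real.log (N / Δ)
      = ∑ d ∈ Finset.Icc 1 ⌊N⌋₊, hfun m d * Ffun (N / d) := by
  set M := ⌊N⌋₊ with hM
  -- distribute
  have step1 : ∀ Δ ∈ Finset.Icc 1 M,
      (∑ d ∈ Δ.divisors, hfun m d * ((Δ / d : ℕ) : ℝ)) * Real.log (N / Δ)
        = ∑ d ∈ Δ.divisors, hfun m d * ((Δ / d : ℕ) : ℝ) * Real.log (N / Δ) := by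
    intro Δ _
    rw [Finset.sum_mul]
  rw [Finset.sum_congr rfl step1]
  rw [← Finset.sum_sigma (Finset.Icc 1 M) (fun Δ => Δ.divisors)
    (fun x => hfun m x.2 * ((x.1 / x.2 : ℕ) : ℝ) * Real.log (N / x.1))]
  have step2 : ∀ d ∈ Finset.Icc 1 M, hfun m d * Ffun (N / d)
      = ∑ q ∈ Finset.Icc 1 (M / d), hfun m d * (q : ℝ) * Real.log (N / (d * q : ℕ)) := by
    intro d hd
    have hd1 : 1 ≤ d := (Finset.mem_Icc.mp hd).1
    rw [Ffun, Finset.mul_sum, hM, ← Nat.floor_div_natCast N d]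
    apply Finset.sum_congr rfl
    intro q hq
    have : N / d / q = N / ((d * q : ℕ) : ℝ) := by
      push_cast
      rw [div_div]
    rw [this]
    ring
  rw [Finset.sum_congr rfl step2]
  rw [← Finset.sum_sigma (Finset.Icc 1 M) (fun d => Finset.Icc 1 (M / d))
    (fun x => hfun m x.1 * (x.2 : ℝ) * Real.log (N / (x.1 * x.2 : ℕ)))]
  apply Finset.sum_nbij' (fun x => ⟨x.2, x.1 / x.2⟩) (fun y => ⟨y.1 * y.2, y.1⟩)
  · rintro ⟨Δ, d⟩ hx
    simp only [Finset.mem_sigma, Finset.mem_Icc, Nat.mem_divisors] at hx ⊢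
    obtain ⟨⟨h1, h2⟩, hdvd, hne⟩ := hx
    have hΔ0 : 0 < Δ := by omega
    have hd0 : 0 < d := Nat.pos_of_dvd_of_pos hdvd hΔ0
    refine ⟨⟨hd0, le_trans (Nat.le_of_dvd hΔ0 hdvd) h2⟩,
      (Nat.one_le_div_iff hd0).mpr (Nat.le_of_dvd hΔ0 hdvd), Nat.div_le_div_right h2⟩
  · rintro ⟨d, q⟩ hy
    simp only [Finset.mem_sigma, Finset.mem_Icc, Nat.mem_divisors] at hy ⊢
    obtain ⟨⟨h1, h2⟩, h3, h4⟩ := hy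
    refine ⟨⟨Nat.mul_pos (by omega) (by omega), ?_⟩, ⟨q, rfl⟩, Nat.mul_ne_zero (by omega) (by omega)⟩
    calc d * q ≤ d * (M / d) := Nat.mul_le_mul_left d h4
      _ = (M / d) * d := mul_comm _ _
      _ ≤ M := Nat.div_mul_le_self M d
  · rintro ⟨Δ, d⟩ hx
    simp only [Finset.mem_sigma, Finset.mem_Icc, Nat.mem_divisors] at hx
    obtain ⟨_, hdvd, hne⟩ := hx
    have h5 : d * (Δ / d) = Δ := Nat.mul_div_cancel' hdvd
    simp [h5]
  · rintro ⟨d, q⟩ hy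
    simp only [Finset.mem_sigma, Finset.mem_Icc] at hy
    have hd : 0 < d := by omega
    have h5 : d * q / d = q := Nat.mul_div_cancel_left q hd
    simp [h5]
  · rintro ⟨Δ, d⟩ hx
    simp only [Finset.mem_sigma, Finset.mem_Icc, Nat.mem_divisors] at hx
    obtain ⟨_, hdvd, hne⟩ := hx
    simp only
    rw [Nat.mul_div_cancel' hdvd]

open Filter


noncomputable def Tm (m : ℕ) (N : ℝ) : ℝ :=
  ∑ Δ ∈ Finset.Icc 1 ⌊N⌋₊,
    (Nat.totient Δ : ℝ) * ((Nat.gcd Δ m : ℝ) / (Nat.totient (Nat.gcd Δ m) : ℝ))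
      * Real.log (N / Δ)

lemma Tm_eq (m : ℕ) (hm : 0 < m) (N : ℝ) :
    Tm m N = ∑ d ∈ Finset.Icc 1 ⌊N⌋₊, hfun m d * Ffun (N / d) := by
  rw [Tm, ← swap_lemma m N]
  apply Finset.sum_congr rfl
  intro Δ hΔ
  congr 1
  have hF : (Nat.totient Δ : ℝ) * ((Nat.gcd Δ m : ℝ) / (Nat.totient (Nat.gcd Δ m) : ℝ))
      = Fm m Δ := rfl
  rw [hF, key_identity m hm, ArithmeticFunction.mul_apply]
  simp only [ArithmeticFunction.natCoe_apply, ArithmeticFunction.id_apply]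
  rw [Nat.sum_divisorsAntidiagonal (f := fun d e => Rm m d * (e : ℝ))]
  apply Finset.sum_congr rfl
  intro d _
  rfl

lemma Lm_pos (m : ℕ) : 0 < (6 / π ^ 2) * ∏ p ∈ m.primeFactors, (1 - 1 / (p : ℝ) ^ 2)⁻¹ := by
  apply mul_pos
  · positivity
  · apply Finset.prod_pos
    intro p hp
    have hp2 : 2 ≤ p := (Nat.prime_of_mem_primeFactors hp).two_le
    have : (2:ℝ) ≤ p := by exact_mod_cast hp2
    have h1 : (1:ℝ)/(p:ℝ)^2 < 1 := by
      rw [div_lt_one (by positivity)]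
      nlinarith
    have : (0:ℝ) < 1 - 1/(p:ℝ)^2 := by linarith
    positivity

lemma Tm_tendsto (m : ℕ) (hm : 0 < m) :
    Filter.Tendsto (fun N => Tm m N / N ^ 2) Filter.atTop
      (nhds (((6 / π ^ 2) * ∏ p ∈ m.primeFactors, (1 - 1 / (p : ℝ) ^ 2)⁻¹) / 4)) := by
  set Lm := (6 / π ^ 2) * ∏ p ∈ m.primeFactors, (1 - 1 / (p : ℝ) ^ 2)⁻¹ with hLm
  set SP : ℕ → ℝ := fun M => ∑ d ∈ Finset.Icc 1 M, hfun m d / (d : ℝ) ^ 2 with hSP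
  -- partial sums tend to Lm
  have hSPtend : Filter.Tendsto SP Filter.atTop (nhds Lm) := by
    have h0 := (hasSum_hfun m hm).tendsto_sum_nat
    have heq : ∀ M : ℕ, SP M = ∑ d ∈ Finset.range (M + 1), hfun m d / (d : ℝ) ^ 2 := by
      intro M
      rw [hSP]
      have : Finset.range (M + 1) = insert 0 (Finset.Icc 1 M) := by
        ext x
        simp [Nat.lt_succ_iff]
        omega
      rw [this, Finset.sum_insert (by simp)]
      simp [hfun_zero]
    rw [show SP = fun M => ∑ d ∈ Finset.range (M + 1), hfun m d / (d : ℝ) ^ 2 from funext heq]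
    exact h0.comp (Filter.tendsto_add_atTop_nat 1)
  have hfloor : Filter.Tendsto (fun N : ℝ => SP ⌊N⌋₊) Filter.atTop (nhds Lm) :=
    hSPtend.comp tendsto_nat_floor_atTop
  -- the bound function
  set B : ℝ → ℝ := fun N => 2/N + 2*(Real.log N/N) + |SP ⌊N⌋₊ - Lm|/4 with hB
  have hBtend : Filter.Tendsto B Filter.atTop (nhds 0) := by
    have h1 : Filter.Tendsto (fun N : ℝ => 2/N) Filter.atTop (nhds 0) := by
      have hinv : Filter.Tendsto (fun N : ℝ => N⁻¹) Filter.atTop (nhds 0) := tendsto_inv_atTop_zero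
      have := hinv.const_mul (2:ℝ)
      simpa [div_eq_mul_inv] using this
    have h2 : Filter.Tendsto (fun N : ℝ => 2*(Real.log N/N)) Filter.atTop (nhds 0) := by
      have := Real.isLittleO_log_id_atTop.tendsto_div_nhds_zero
      simpa using this.const_mul 2
    have h3 : Filter.Tendsto (fun N : ℝ => |SP ⌊N⌋₊ - Lm|/4) Filter.atTop (nhds 0) := by
      have := (hfloor.sub_const Lm).abs
      simp only [sub_self, abs_zero] at this
      simpa using this.div_const 4
    have := (h1.add h2).add h3
    simpa using this
  -- main bound
  have hbound : ∀ᶠ N in Filter.atTop, ‖Tm m N / N ^ 2 - Lm / 4‖ ≤ B N := by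
    filter_upwards [Filter.eventually_ge_atTop (1:ℝ)] with N hN
    set M := ⌊N⌋₊ with hM
    have hM1 : 1 ≤ M := Nat.le_floor (by exact_mod_cast hN)
    have hMN : (M:ℝ) ≤ N := Nat.floor_le (by linarith)
    have hNpos : (0:ℝ) < N := by linarith
    have hA : ∑ d ∈ Finset.Icc 1 M, hfun m d * ((N/d)^2/4) = N^2/4 * SP M := by
      rw [hSP, Finset.mul_sum]
      apply Finset.sum_congr rfl
      intro d hd
      have hd1 : 1 ≤ d := (Finset.mem_Icc.mp hd).1
      have hdR : (0:ℝ) < d := by exact_mod_cast hd1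
      field_simp
    have hsplit : Tm m N / N^2 - Lm/4
        = (∑ d ∈ Finset.Icc 1 M, hfun m d * (Ffun (N/d) - (N/d)^2/4)) / N^2
          + (SP M - Lm)/4 := by
      rw [Tm_eq m hm N, ← hM]
      have : ∑ d ∈ Finset.Icc 1 M, hfun m d * Ffun (N/d)
          = (∑ d ∈ Finset.Icc 1 M, hfun m d * (Ffun (N/d) - (N/d)^2/4)) + N^2/4 * SP M := by
        rw [← hA, ← Finset.sum_add_distrib]
        apply Finset.sum_congr rfl
        intro d _
        ring
      rw [this]
      generalize (∑ d ∈ Finset.Icc 1 M, hfun m d * (Ffun (N/d) - (N/d)^2/4)) = S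
      field_simp
      ring
    -- bound the error sum
    have herr : |∑ d ∈ Finset.Icc 1 M, hfun m d * (Ffun (N/d) - (N/d)^2/4)|
        ≤ 2 * N * (1 + Real.log N) := by
      calc |∑ d ∈ Finset.Icc 1 M, hfun m d * (Ffun (N/d) - (N/d)^2/4)|
          ≤ ∑ d ∈ Finset.Icc 1 M, |hfun m d * (Ffun (N/d) - (N/d)^2/4)| :=
            Finset.abs_sum_le_sum_abs _ _
        _ ≤ ∑ d ∈ Finset.Icc 1 M, 2 * (N/d) := by
            apply Finset.sum_le_sum
            intro d hd
            have hd1 : 1 ≤ d := (Finset.mem_Icc.mp hd).1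
            have hdM : d ≤ M := (Finset.mem_Icc.mp hd).2
            have hdR : (1:ℝ) ≤ d := by exact_mod_cast hd1
            have hdN : (d:ℝ) ≤ N := le_trans (by exact_mod_cast hdM) hMN
            have hx : 1 ≤ N / d := (one_le_div (by linarith)).mpr hdN
            rw [abs_mul]
            calc |hfun m d| * |Ffun (N/d) - (N/d)^2/4|
                ≤ 1 * (2 * (N/d)) := by
                  apply mul_le_mul (hfun_abs_le m d) (Ffun_approx hx)
                    (abs_nonneg _) zero_le_one
              _ = 2 * (N/d) := by ring
        _ = 2 * N * ∑ d ∈ Finset.Icc 1 M, 1/(d:ℝ) := by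
            rw [Finset.mul_sum]
            apply Finset.sum_congr rfl
            intro d _
            ring
        _ ≤ 2 * N * (1 + Real.log N) := by
            apply mul_le_mul_of_nonneg_left _ (by linarith)
            have hharm : ∑ d ∈ Finset.Icc 1 M, 1/(d:ℝ) = (harmonic M : ℝ) := by
              unfold harmonic
              push_cast
              rw [← Finset.Ico_add_one_right_eq_Icc, Finset.sum_Ico_eq_sum_range]
              have hMM : M + 1 - 1 = M := by omega
              rw [hMM]
              apply Finset.sum_congr rfl
              intro i _
              rw [one_div]
              congr 1
              push_cast
              ring
            rw [hharm]
            calc (harmonic M : ℝ) ≤ 1 + Real.log M := harmonic_le_one_add_log M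
              _ ≤ 1 + Real.log N := by
                  have hMpos : (0:ℝ) < M := by exact_mod_cast hM1
                  have := Real.log_le_log hMpos hMN
                  linarith
    rw [hsplit, hB]
    have hN2 : (0:ℝ) < N^2 := by positivity
    calc ‖(∑ d ∈ Finset.Icc 1 M, hfun m d * (Ffun (N/d) - (N/d)^2/4)) / N^2 + (SP M - Lm)/4‖
        ≤ ‖(∑ d ∈ Finset.Icc 1 M, hfun m d * (Ffun (N/d) - (N/d)^2/4)) / N^2‖
          + ‖(SP M - Lm)/4‖ := norm_add_le _ _
      _ ≤ (2 * N * (1 + Real.log N)) / N^2 + |SP M - Lm|/4 := by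
          apply add_le_add
          · rw [Real.norm_eq_abs, abs_div, abs_of_pos hN2]
            gcongr
          · rw [Real.norm_eq_abs, abs_div]
            simp
      _ = 2/N + 2*(Real.log N/N) + |SP M - Lm|/4 := by
          field_simp
  have := squeeze_zero_norm' hbound hBtend
  rwa [tendsto_sub_nhds_zero_iff] at this

/-- The constant `C_m = (φ(m)/(ζ(2)m)) ∏_{p∣m} (1-1/p²)⁻¹`, with `ζ(2) = π²/6`. -/
noncomputable def Cm (m : ℕ) : ℝ :=
  ((Nat.totient m : ℝ) / ((π ^ 2 / 6) * m)) *
    ∏ p ∈ m.primeFactors, (1 - 1 / (p : ℝ) ^ 2)⁻¹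

/-- The pair correlation function of Farey fractions with denominators coprime to `m`. -/
noncomputable def g (m : ℕ) (lam : ℝ) : ℝ :=
  ((Nat.totient m : ℝ) / m) * (Cm m / lam ^ 2) *
    ∑ Δ ∈ Finset.Icc 1 ⌊2 * lam / Cm m⌋₊,
      (Nat.totient Δ : ℝ) *
        ((Nat.gcd Δ m : ℝ) / (Nat.totient (Nat.gcd Δ m) : ℝ)) *
        Real.log (2 * lam / (Cm m * Δ))

theorem g_tendsto_one (m : ℕ) (hm : 0 < m) :
    Filter.Tendsto (g m) Filter.atTop (nhds 1) := by
  have hφ : (0:ℝ) < (Nat.totient m : ℝ) := by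
    exact_mod_cast Nat.totient_pos.mpr hm
  have hmR : (0:ℝ) < (m:ℝ) := by exact_mod_cast hm
  have hπ := Real.pi_pos
  have hP : (0:ℝ) < ∏ p ∈ m.primeFactors, (1 - 1 / (p : ℝ) ^ 2)⁻¹ := by
    apply Finset.prod_pos
    intro p hp
    have hp2 : (2:ℝ) ≤ p := by exact_mod_cast (Nat.prime_of_mem_primeFactors hp).two_le
    have h1 : (1:ℝ)/(p:ℝ)^2 < 1 := by
      rw [div_lt_one (by positivity)]
      nlinarith
    have : (0:ℝ) < 1 - 1/(p:ℝ)^2 := by linarith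
    positivity
  have hCm : 0 < Cm m := by
    rw [Cm]
    exact mul_pos (div_pos hφ (mul_pos (by positivity) hmR)) hP
  set Lm := (6 / π ^ 2) * ∏ p ∈ m.primeFactors, (1 - 1 / (p : ℝ) ^ 2)⁻¹ with hLm
  set c := ((Nat.totient m : ℝ) / m) * (4 / Cm m) with hc
  -- composition
  have hN : Filter.Tendsto (fun lam : ℝ => 2 * lam / Cm m) Filter.atTop Filter.atTop := by
    apply Filter.Tendsto.atTop_div_const hCm
    exact Filter.tendsto_id.const_mul_atTop two_pos
  have htt := (Tm_tendsto m hm).comp hN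
  have final := htt.const_mul c
  have hval : c * (Lm / 4) = 1 := by
    rw [hc, hLm, Cm]
    have hπ2 : (π:ℝ) ≠ 0 := Real.pi_ne_zero
    have hQ : (0:ℝ) < ∏ x ∈ m.primeFactors, (1 - 1 / (x:ℝ) ^ 2) := by
      apply Finset.prod_pos
      intro p hp
      have hp2 : (2:ℝ) ≤ p := by exact_mod_cast (Nat.prime_of_mem_primeFactors hp).two_le
      have h1 : (1:ℝ)/(p:ℝ)^2 < 1 := by
        rw [div_lt_one (by positivity)]
        nlinarith
      linarith
    have h24 : ((Nat.totient m : ℝ) * π ^ 2 * ↑m * ∏ x ∈ m.primeFactors, (1 - 1 / (x:ℝ) ^ 2)) * 24 ≠ 0 :=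
      ne_of_gt (mul_pos (mul_pos (mul_pos (mul_pos hφ (pow_pos hπ 2)) hmR) hQ) (by norm_num))
    field_simp
    ring_nf
    exact mul_inv_cancel₀ (by simpa [one_div, inv_pow] using hP.ne')
  rw [hval] at final
  apply Filter.Tendsto.congr' _ final
  filter_upwards [Filter.eventually_ge_atTop (1:ℝ)] with lam hlam
  have hlam0 : lam ≠ 0 := by linarith
  have hCm0 : Cm m ≠ 0 := ne_of_gt hCm
  have hsum : Tm m (2 * lam / Cm m)
      = ∑ Δ ∈ Finset.Icc 1 ⌊2 * lam / Cm m⌋₊,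
          (Nat.totient Δ : ℝ) * ((Nat.gcd Δ m : ℝ) / (Nat.totient (Nat.gcd Δ m) : ℝ))
            * Real.log (2 * lam / (Cm m * Δ)) := by
    rw [Tm]
    apply Finset.sum_congr rfl
    intro Δ _
    rw [div_div]
  show c * (Tm m (2 * lam / Cm m) / (2 * lam / Cm m) ^ 2) = g m lam
  rw [hsum, g, hc]
  have hNne : (2 * lam / Cm m) ≠ 0 := by
    apply div_ne_zero _ hCm0
    linarith
  field_simp
  ring
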